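/- arXiv:1505.02281 — 5 statements merged into one kernel-verified Lean document; each statement's English description precedes it below -/
import Mathlib

section
/- Let $L_1,\dots,L_d$ be random variables with quantile functions $F_1^-,\dots,F_d^-$ and let $L^+ = \sum_{j=1}^d L_j$. For any $\alpha \in (0,1)$, the Value-at-Risk satisfies $\operatorname{VaR}_\alpha(L^+) \ge d \min_j F_j^-(\alpha/d)$, where $\operatorname{VaR}_\alpha(L^+) = \inf\{x : F_{L^+}(x) \ge \alpha\}$. -/
/-!
If `∑ j, L j ω ≤ x` then some `L j ω ≤ x / d`, so `F_{L⁺}(x) ≤ ∑ j, F_j (x / d)`. Hence whenever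
`α ≤ F_{L⁺}(x)`, pigeonhole gives a `j` with `α / d ≤ F_j (x / d)`, i.e. `F_j⁻(α / d) ≤ x / d`.
Taking the infimum over such `x` gives the bound; the limits of distribution functions at `±∞`
guarantee that the infima involved are genuine (nonempty, bounded below sets).
-/

open MeasureTheory Filter ProbabilityTheory Topology

section Quantile

variable {α : Type*} [LinearOrder α] [Nonempty α] {F : α → ℝ} {l p : ℝ}

lemma bddBelow_setOf_le_of_tendsto_atBot (hF : Tendsto F atBot (𝓝 l)) (hp : l < p) :
    BddBelow {x | p ≤ F x} := by
  obtain ⟨a, ha⟩ := eventually_atBot.mp (hF.eventually_lt_const hp)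
  exact ⟨a, fun x hx => le_of_not_ge fun hxa => (ha x hxa).not_ge hx⟩

lemma nonempty_setOf_le_of_tendsto_atTop (hF : Tendsto F atTop (𝓝 l)) (hp : p < l) :
    {x | p ≤ F x}.Nonempty := by
  obtain ⟨x, hx⟩ := (hF.eventually_const_lt hp).exists
  exact ⟨x, hx.le⟩

end Quantile

section Pigeonhole

variable {ι : Type*} [Fintype ι] [Nonempty ι] {a : ι → ℝ} {x : ℝ}

lemma exists_le_div_card_of_sum_le (h : ∑ i, a i ≤ x) : ∃ i, a i ≤ x / Fintype.card ι := by
  have hcard : (0 : ℝ) < Fintype.card ι := Nat.cast_pos.mpr Fintype.card_pos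
  have hsum : ∑ i, a i ≤ ∑ _i : ι, x / Fintype.card ι := by
    simpa [Finset.sum_const, nsmul_eq_mul, mul_div_cancel₀ _ hcard.ne'] using h
  obtain ⟨i, -, hi⟩ := Finset.exists_le_of_sum_le Finset.univ_nonempty hsum
  exact ⟨i, hi⟩

lemma exists_div_card_le_of_le_sum (h : x ≤ ∑ i, a i) : ∃ i, x / Fintype.card ι ≤ a i := by
  have hcard : (0 : ℝ) < Fintype.card ι := Nat.cast_pos.mpr Fintype.card_pos
  have hsum : ∑ _i : ι, x / Fintype.card ι ≤ ∑ i, a i := by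
    simpa [Finset.sum_const, nsmul_eq_mul, mul_div_cancel₀ _ hcard.ne'] using h
  obtain ⟨i, -, hi⟩ := Finset.exists_le_of_sum_le Finset.univ_nonempty hsum
  exact ⟨i, hi⟩

end Pigeonhole

section DistributionFunction

variable {Ω : Type*} [MeasurableSpace Ω] (μ : Measure Ω)

lemma cdf_map_eq_measureReal_setOf_le [IsProbabilityMeasure μ] {X : Ω → ℝ} (hX : Measurable X)
    (x : ℝ) : cdf (μ.map X) x = μ.real {ω | X ω ≤ x} := by
  have : IsProbabilityMeasure (μ.map X) := Measure.isProbabilityMeasure_map hX.aemeasurable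
  rw [cdf_eq_real, map_measureReal_apply hX measurableSet_Iic]
  rfl

lemma tendsto_measureReal_setOf_le_atBot [IsProbabilityMeasure μ] {X : Ω → ℝ}
    (hX : Measurable X) : Tendsto (fun x => μ.real {ω | X ω ≤ x}) atBot (𝓝 0) :=
  (tendsto_cdf_atBot _).congr (cdf_map_eq_measureReal_setOf_le μ hX)

lemma tendsto_measureReal_setOf_le_atTop [IsProbabilityMeasure μ] {X : Ω → ℝ}
    (hX : Measurable X) : Tendsto (fun x => μ.real {ω | X ω ≤ x}) atTop (𝓝 1) :=
  (tendsto_cdf_atTop _).congr (cdf_map_eq_measureReal_setOf_le μ hX)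

variable {ι : Type*} [Fintype ι] [Nonempty ι]

lemma measureReal_sum_le_le_sum [IsFiniteMeasure μ] (X : ι → Ω → ℝ) (x : ℝ) :
    μ.real {ω | ∑ i, X i ω ≤ x} ≤ ∑ i, μ.real {ω | X i ω ≤ x / Fintype.card ι} := by
  refine (measureReal_mono fun ω hω => ?_).trans (measureReal_iUnion_fintype_le _)
  exact Set.mem_iUnion.mpr (exists_le_div_card_of_sum_le hω)

lemma exists_div_card_le_measureReal_of_le_measureReal_sum [IsFiniteMeasure μ]
    (X : ι → Ω → ℝ) {x p : ℝ} (h : p ≤ μ.real {ω | ∑ i, X i ω ≤ x}) :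
    ∃ i, p / Fintype.card ι ≤ μ.real {ω | X i ω ≤ x / Fintype.card ι} :=
  exists_div_card_le_of_le_sum (h.trans (measureReal_sum_le_le_sum μ X x))

end DistributionFunction

theorem stmt_2 {Ω : Type*} [MeasurableSpace Ω] (μ : Measure Ω) [IsProbabilityMeasure μ]
    (d : ℕ) (hd : 0 < d) (L : Fin d → Ω → ℝ) (hL : ∀ j, Measurable (L j))
    (α : ℝ) (hα : α ∈ Set.Ioo (0:ℝ) 1) :
    d * Finset.univ.inf' (Finset.univ_nonempty_iff.mpr (Fin.pos_iff_nonempty.mp hd))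
        (fun j => sInf {x : ℝ | α / d ≤ (μ {ω | L j ω ≤ x}).toReal}) ≤
      sInf {x : ℝ | α ≤ (μ {ω | ∑ j, L j ω ≤ x}).toReal} := by
  obtain ⟨hα0, hα1⟩ := hα
  have hdR : (0 : ℝ) < d := Nat.cast_pos.mpr hd
  have : Nonempty (Fin d) := Fin.pos_iff_nonempty.mp hd
  have hsum : Measurable fun ω => ∑ j, L j ω := Finset.measurable_sum _ fun j _ => hL j
  refine le_csInf (nonempty_setOf_le_of_tendsto_atTop
    (tendsto_measureReal_setOf_le_atTop μ hsum) hα1) fun x hx => ?_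
  obtain ⟨j, hj⟩ := exists_div_card_le_measureReal_of_le_measureReal_sum μ L hx
  rw [Fintype.card_fin] at hj
  have hquantile : sInf {y : ℝ | α / d ≤ (μ {ω | L j ω ≤ y}).toReal} ≤ x / d :=
    csInf_le (bddBelow_setOf_le_of_tendsto_atBot
      (tendsto_measureReal_setOf_le_atBot μ (hL j)) (div_pos hα0 hdR)) hj
  calc _ ≤ d * (x / d) := by
        gcongr
        exact (Finset.inf'_le _ (Finset.mem_univ j)).trans hquantile
    _ = x := mul_div_cancel₀ _ hdR.ne'
end

section
/- Let $\bar F : [0,\infty) \to [0,1]$ be a decreasing function and for $s > 0$, $t \in [0, s/d)$ define $D(s,t) = \frac{d}{s-dt}\int_t^{s-(d-1)t} \bar F(x)\,dx$, with $D(s, s/d) := d\bar F(s/d)$, and $D(s) = \min_{t \in [0, s/d]} D(s,t)$. Then $D$ is decreasing: for $s' \le s$, $D(s) \le D(s')$. -/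
/-!
Shifting the left endpoint by `δ = (s - s') / d` keeps the window length `κ = s - d t`
unchanged, so every window `[t', t' + κ]` admissible for `s'` is matched by the window
`[t' + δ, t' + δ + κ]` admissible for `s`, over which the decreasing `F̄` has a smaller
integral. Hence every value of `D(s', ·)` dominates a value of `D(s, ·)`; the infimum
defining `D(s)` is of a set bounded below by `d F̄(s)`, as an average over a window ending
before `s` is at least the value at its right end.
-/

open intervalIntegral Set

theorem AntitoneOn.intervalIntegral_add_le {f : ℝ → ℝ} {a b κ : ℝ}
    (hf : AntitoneOn f (Ici a)) (hab : a ≤ b) (hκ : 0 ≤ κ) :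
    ∫ x in b..b + κ, f x ≤ ∫ x in a..a + κ, f x := by
  have hshift : ∫ x in b..b + κ, f x = ∫ x in a..a + κ, f (x + (b - a)) := by
    rw [integral_comp_add_right f (b - a)]
    ring_nf
  have hsub : uIcc a (a + κ) ⊆ Ici a :=
    uIcc_of_le (by linarith : a ≤ a + κ) ▸ Icc_subset_Ici_self
  have hg : AntitoneOn (fun x ↦ f (x + (b - a))) (uIcc a (a + κ)) := fun x hx y hy hxy ↦
    hf (mem_Ici.mpr (by linarith [mem_Ici.mp (hsub hx)]))
      (mem_Ici.mpr (by linarith [mem_Ici.mp (hsub hy)])) (by linarith)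
  rw [hshift]
  refine integral_mono_on (by linarith) hg.intervalIntegrable (hf.mono hsub).intervalIntegrable
    fun x hx ↦ hf (mem_Ici.mpr hx.1) (mem_Ici.mpr (by linarith [hx.1])) (by linarith)

theorem AntitoneOn.mul_le_intervalIntegral_add {f : ℝ → ℝ} {a κ : ℝ}
    (hf : AntitoneOn f (Icc a (a + κ))) (hκ : 0 ≤ κ) :
    κ * f (a + κ) ≤ ∫ x in a..a + κ, f x := by
  have hle : a ≤ a + κ := by linarith
  calc κ * f (a + κ) = ∫ _ in a..a + κ, f (a + κ) := by simp
    _ ≤ ∫ x in a..a + κ, f x :=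
      integral_mono_on hle intervalIntegrable_const
        (hf.mono (uIcc_of_le hle).subset).intervalIntegrable
        fun x hx ↦ hf hx (right_mem_Icc.mpr hle) hx.2

def IsWindowAverage (d : ℕ) (Fbar : ℝ → ℝ) (D2 : ℝ → ℝ → ℝ) : Prop :=
  (∀ s > (0:ℝ), ∀ t, 0 ≤ t → t < s / d →
    D2 s t = d / (s - d * t) * ∫ x in t..(s - (d - 1) * t), Fbar x) ∧
  ∀ s > (0:ℝ), D2 s (s / d) = d * Fbar (s / d)

namespace IsWindowAverage

variable {d : ℕ} {Fbar : ℝ → ℝ} {D2 : ℝ → ℝ → ℝ}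

theorem apply_eq_window (h : IsWindowAverage d Fbar D2)
    {s t : ℝ} (hs : 0 < s) (ht : 0 ≤ t) (hts : t < s / d) :
    D2 s t = d / (s - d * t) * ∫ x in t..t + (s - d * t), Fbar x := by
  rw [h.1 s hs t ht hts, show s - (d - 1) * t = t + (s - d * t) by ring]

theorem mul_apply_le (h : IsWindowAverage d Fbar D2) (hd : 0 < d)
    (hmono : AntitoneOn Fbar (Ici 0)) {s t : ℝ} (hs : 0 < s) (ht : t ∈ Icc 0 (s / d)) :
    d * Fbar s ≤ D2 s t := by
  have hd0 : (0:ℝ) < d := Nat.cast_pos.mpr hd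
  rcases ht.2.eq_or_lt with rfl | hts
  · rw [h.2 s hs]
    refine mul_le_mul_of_nonneg_left (hmono (div_nonneg hs.le hd0.le) hs.le ?_) hd0.le
    exact div_le_self hs.le (Nat.one_le_cast.mpr hd)
  · rw [h.apply_eq_window hs ht.1 hts]
    set κ := s - d * t
    have hκ : 0 < κ := by have := (lt_div_iff₀ hd0).mp hts; linarith
    have hwindow : κ * Fbar (t + κ) ≤ ∫ x in t..t + κ, Fbar x :=
      (hmono.mono fun x hx ↦ mem_Ici.mpr (ht.1.trans hx.1)).mul_le_intervalIntegral_add hκ.le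
    calc (d:ℝ) * Fbar s ≤ d / κ * (κ * Fbar (t + κ)) := by
          rw [← mul_assoc, div_mul_cancel₀ _ hκ.ne']
          refine mul_le_mul_of_nonneg_left (hmono ?_ (mem_Ici.mpr hs.le) ?_) hd0.le
          · exact mem_Ici.mpr (by linarith [ht.1])
          · nlinarith [ht.1, (Nat.one_le_cast.mpr hd : (1:ℝ) ≤ d)]
      _ ≤ d / κ * ∫ x in t..t + κ, Fbar x :=
          mul_le_mul_of_nonneg_left hwindow (div_nonneg hd0.le hκ.le)

theorem apply_add_le (h : IsWindowAverage d Fbar D2) (hd : 0 < d)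
    (hmono : AntitoneOn Fbar (Ici 0)) {s s' t' : ℝ} (hs' : 0 < s') (hle : s' ≤ s)
    (ht' : t' ∈ Icc 0 (s' / d)) :
    D2 s (t' + (s - s') / d) ≤ D2 s' t' := by
  have hd0 : (0:ℝ) < d := Nat.cast_pos.mpr hd
  have hs : 0 < s := hs'.trans_le hle
  have hδ : 0 ≤ (s - s') / d := div_nonneg (by linarith) hd0.le
  have hlen : s - d * (t' + (s - s') / d) = s' - d * t' := by field_simp; ring
  rcases ht'.2.eq_or_lt with rfl | hts
  · rw [show s' / d + (s - s') / d = s / d by ring, h.2 s hs, h.2 s' hs']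
    refine mul_le_mul_of_nonneg_left (hmono ?_ ?_ ?_) hd0.le
    · exact div_nonneg hs'.le hd0.le
    · exact div_nonneg hs.le hd0.le
    · gcongr
  · have hκ : 0 < s' - d * t' := by have := (lt_div_iff₀ hd0).mp hts; linarith
    have hts' : t' + (s - s') / d < s / d := by
      rw [lt_div_iff₀ hd0]; linarith
    rw [h.apply_eq_window hs (by linarith [ht'.1]) hts', h.apply_eq_window hs' ht'.1 hts, hlen]
    exact mul_le_mul_of_nonneg_left
      ((hmono.mono (Ici_subset_Ici.mpr ht'.1)).intervalIntegral_add_le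
        (le_add_of_nonneg_right hδ) hκ.le)
      (div_nonneg hd0.le hκ.le)

end IsWindowAverage

theorem stmt_4_general (d : ℕ) (hd : 2 ≤ d) (Fbar : ℝ → ℝ)
    (hmono : AntitoneOn Fbar (Set.Ici 0))
    (D2 : ℝ → ℝ → ℝ)
    (hD2 : ∀ s > (0:ℝ), ∀ t, 0 ≤ t → t < s / d →
      D2 s t = d / (s - d * t) * ∫ x in t..(s - (d - 1) * t), Fbar x)
    (hD2' : ∀ s > (0:ℝ), D2 s (s / d) = d * Fbar (s / d))
    (D1 : ℝ → ℝ)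
    (hD1 : ∀ s > (0:ℝ), D1 s = sInf (D2 s '' Set.Icc 0 (s / d))) :
    ∀ s' s : ℝ, 0 < s' → s' ≤ s → D1 s ≤ D1 s' := by
  intro s' s hs' hle
  have hs : 0 < s := hs'.trans_le hle
  have hd0 : 0 < d := by omega
  have hD : IsWindowAverage d Fbar D2 := ⟨hD2, hD2'⟩
  have hbdd : BddBelow (D2 s '' Icc 0 (s / d)) :=
    ⟨d * Fbar s, forall_mem_image.2 fun t ht ↦ hD.mul_apply_le hd0 hmono hs ht⟩
  rw [hD1 s hs, hD1 s' hs']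
  refine le_csInf ((nonempty_Icc.2 (by positivity)).image _) ?_
  rintro _ ⟨t', ht', rfl⟩
  have hshift : t' + (s - s') / d ∈ Icc 0 (s / d) := by
    have hδ : 0 ≤ (s - s') / d := div_nonneg (by linarith) (by positivity)
    refine ⟨by linarith [ht'.1], ?_⟩
    calc t' + (s - s') / d ≤ s' / d + (s - s') / d := by linarith [ht'.2]
      _ = s / d := by ring
  exact (csInf_le hbdd (mem_image_of_mem _ hshift)).trans
    (hD.apply_add_le hd0 hmono hs' hle ht')

theorem stmt_4 (d : ℕ) (hd : 2 ≤ d) (Fbar : ℝ → ℝ)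
    (hmono : AntitoneOn Fbar (Set.Ici 0)) (hcont : Continuous Fbar)
    (hrange : ∀ x ≥ (0:ℝ), Fbar x ∈ Set.Icc (0:ℝ) 1)
    (D2 : ℝ → ℝ → ℝ)
    (hD2 : ∀ s > (0:ℝ), ∀ t, 0 ≤ t → t < s / d →
      D2 s t = d / (s - d * t) * ∫ x in t..(s - (d - 1) * t), Fbar x)
    (hD2' : ∀ s > (0:ℝ), D2 s (s / d) = d * Fbar (s / d))
    (D1 : ℝ → ℝ)
    (hD1 : ∀ s > (0:ℝ), D1 s = sInf (D2 s '' Set.Icc 0 (s / d))) :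
    ∀ s' s : ℝ, 0 < s' → s' ≤ s → D1 s ≤ D1 s' :=
  stmt_4_general d hd Fbar hmono D2 hD2 hD2' D1 hD1
end

section
/- Let $d > 2$ be an integer and $\theta > 0$ with $\theta \ne 1$. Define $h_2(x) = (d/(1-\theta) - 1)x^{-1/\theta + 1} - (d-1)x^{-1/\theta} + x - (d\theta/(1-\theta) + 1)$ for $x \in (1,\infty)$. Then $h_2$ has a unique root on $(1,\infty)$. -/
/-!
Writing `a = d - 1`, one computes `h₂ 1 = 0` and `h₂' x = x ^ (-1/θ - 1) * g x` with
`g x = x ^ (1 + 1/θ) - ((a + θ)/θ) x + a/θ` (this is `h₂DerivFactor d θ`). Again `g 1 = 0`, and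
`g'` is strictly increasing with `g' 1 = (1 - a)/θ < 0` and `g' → ∞`, so `g` decreases and then
increases to `∞`: on `(1, ∞)` it changes sign exactly once, from `-` to `+`. Hence `h₂` has the
same shape, and since `h₂ → ∞` it too changes sign exactly once on `(1, ∞)`.
-/

open Set Filter Topology

section SignChange

variable {φ φ' : ℝ → ℝ} {a m : ℝ}

theorem exists_sign_eq_sign_sub_of_strictMonoOn (hcont : ContinuousOn φ (Ici a))
    (hmono : StrictMonoOn φ (Ici a)) (ha : φ a < 0) (htop : Tendsto φ atTop atTop) :
    ∃ x ∈ Ioi a, ∀ y ∈ Ici a, SignType.sign (φ y) = SignType.sign (y - x) := by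
  obtain ⟨M, hM, haM⟩ := ((htop.eventually_gt_atTop 0).and (eventually_gt_atTop a)).exists
  obtain ⟨x, hx, hφx⟩ :=
    intermediate_value_Icc haM.le (hcont.mono Icc_subset_Ici_self) ⟨ha.le, hM.le⟩
  have hax : a < x := hx.1.lt_of_ne (by rintro rfl; linarith)
  refine ⟨x, hax, fun y hy => ?_⟩
  rcases lt_trichotomy y x with hyx | rfl | hxy
  · rw [sign_neg (sub_neg.2 hyx), sign_neg (hφx ▸ hmono hy hax.le hyx)]
  · rw [hφx, sub_self]
  · rw [sign_pos (sub_pos.2 hxy), sign_pos (hφx ▸ hmono hax.le hy hxy)]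

theorem exists_sign_eq_sign_sub_of_strictAntiOn_of_strictMonoOn (hcont : ContinuousOn φ (Ici a))
    (h0 : φ a = 0) (ham : a < m) (hanti : StrictAntiOn φ (Icc a m))
    (hmono : StrictMonoOn φ (Ici m)) (htop : Tendsto φ atTop atTop) :
    ∃ x ∈ Ioi a, ∀ y ∈ Ioi a, SignType.sign (φ y) = SignType.sign (y - x) := by
  have hneg : ∀ y ∈ Ioc a m, φ y < 0 := fun y hy =>
    h0 ▸ hanti ⟨le_rfl, ham.le⟩ (Ioc_subset_Icc_self hy) hy.1
  obtain ⟨x, hmx, hsign⟩ := exists_sign_eq_sign_sub_of_strictMonoOn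
    (hcont.mono (Ici_subset_Ici.2 ham.le)) hmono (hneg m ⟨ham, le_rfl⟩) htop
  refine ⟨x, ham.trans hmx, fun y hy => ?_⟩
  rcases le_or_gt y m with hym | hmy
  · rw [sign_neg (hneg y ⟨hy, hym⟩), sign_neg (sub_neg.2 (hym.trans_lt hmx))]
  · exact hsign y hmy.le

theorem strictAntiOn_and_strictMonoOn_of_sign_deriv (hcont : ContinuousOn φ (Ici a))
    (hderiv : ∀ x ∈ Ioi a, HasDerivAt φ (φ' x) x)
    (hsign : ∀ x ∈ Ioi a, SignType.sign (φ' x) = SignType.sign (x - m)) (ham : a ≤ m) :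
    StrictAntiOn φ (Icc a m) ∧ StrictMonoOn φ (Ici m) := by
  constructor
  · refine strictAntiOn_of_deriv_neg (convex_Icc a m) (hcont.mono Icc_subset_Ici_self) ?_
    intro x hx
    rw [interior_Icc] at hx
    rw [(hderiv x hx.1).deriv, ← sign_eq_neg_one_iff, hsign x hx.1, sign_eq_neg_one_iff]
    exact sub_neg.2 hx.2
  · refine strictMonoOn_of_deriv_pos (convex_Ici m) (hcont.mono (Ici_subset_Ici.2 ham)) ?_
    intro x hx
    rw [interior_Ici] at hx
    have hax : x ∈ Ioi a := ham.trans_lt hx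
    rw [(hderiv x hax).deriv, ← sign_eq_one_iff, hsign x hax, sign_eq_one_iff]
    exact sub_pos.2 hx

theorem existsUnique_eq_zero_of_sign_eq_sign_sub {x : ℝ} (hx : x ∈ Ioi a)
    (hsign : ∀ y ∈ Ioi a, SignType.sign (φ y) = SignType.sign (y - x)) :
    ∃! y, y ∈ Ioi a ∧ φ y = 0 := by
  refine ⟨x, ⟨hx, ?_⟩, fun y ⟨hy, hφy⟩ => ?_⟩
  · simpa using hsign x hx
  · have := hsign y hy
    rw [hφy, sign_zero, eq_comm, sign_eq_zero_iff, sub_eq_zero] at this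
    exact this

end SignChange

namespace ParetoWorstVaR

noncomputable def h₂ (d θ x : ℝ) : ℝ :=
  (d / (1 - θ) - 1) * x ^ (-1 / θ + 1) - (d - 1) * x ^ (-1 / θ) + x - (d * θ / (1 - θ) + 1)

noncomputable def h₂DerivFactor (d θ x : ℝ) : ℝ :=
  x ^ (1 + 1 / θ) - (d - 1 + θ) / θ * x + (d - 1) / θ

variable {d θ x : ℝ}

theorem hasDerivAt_h₂DerivFactor (hx : 0 < x) :
    HasDerivAt (h₂DerivFactor d θ) ((1 + 1 / θ) * x ^ (1 / θ) - (d - 1 + θ) / θ) x := by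
  have hpow := Real.hasDerivAt_rpow_const (p := 1 + 1 / θ) (Or.inl hx.ne')
  rw [add_sub_cancel_left] at hpow
  have hlin := (hasDerivAt_id' x).const_mul ((d - 1 + θ) / θ)
  rw [mul_one] at hlin
  exact (hpow.sub hlin).add_const ((d - 1) / θ)

theorem continuous_h₂DerivFactor (hθ : 0 < θ) : Continuous (h₂DerivFactor d θ) := by
  unfold h₂DerivFactor
  have : 0 ≤ 1 + 1 / θ := by positivity
  fun_prop (disch := assumption)

theorem h₂DerivFactor_one (hθ : θ ≠ 0) : h₂DerivFactor d θ 1 = 0 := by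
  simp only [h₂DerivFactor, Real.one_rpow]
  field_simp
  ring

theorem tendsto_h₂DerivFactor_atTop (hθ : 0 < θ) : Tendsto (h₂DerivFactor d θ) atTop atTop := by
  have hfactor : Tendsto (fun x : ℝ => x ^ (1 / θ) - (d - 1 + θ) / θ) atTop atTop :=
    tendsto_atTop_add_const_right _ _ (tendsto_rpow_atTop (by positivity))
  refine (tendsto_atTop_add_const_right _ ((d - 1) / θ)
    (tendsto_id.atTop_mul_atTop₀ hfactor)).congr' ?_
  filter_upwards [eventually_gt_atTop 0] with x hx
  rw [h₂DerivFactor, Real.rpow_add hx, Real.rpow_one, id]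
  ring

theorem exists_sign_deriv_h₂DerivFactor_eq_sign_sub (hd : 2 < d) (hθ : 0 < θ) :
    ∃ t ∈ Ioi 1, ∀ y ∈ Ici 1, SignType.sign ((1 + 1 / θ) * y ^ (1 / θ) - (d - 1 + θ) / θ)
      = SignType.sign (y - t) := by
  have hθinv : 0 < 1 / θ := by positivity
  refine exists_sign_eq_sign_sub_of_strictMonoOn
    (Continuous.continuousOn (by fun_prop (disch := exact hθinv.le))) ?_ ?_ ?_
  · intro y hy z _ hyz
    have hpow := Real.rpow_lt_rpow (zero_le_one.trans hy) hyz hθinv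
    dsimp only
    gcongr
  · rw [Real.one_rpow, mul_one,
      show 1 + 1 / θ - (d - 1 + θ) / θ = (2 - d) / θ by field_simp; ring]
    exact div_neg_of_neg_of_pos (by linarith) hθ
  · exact tendsto_atTop_add_const_right _ _
      ((tendsto_rpow_atTop hθinv).const_mul_atTop (by positivity))

theorem hasDerivAt_h₂ (hθ : θ ≠ 0) (hθ1 : θ ≠ 1) (hx : 0 < x) :
    HasDerivAt (h₂ d θ) (x ^ (-1 / θ - 1) * h₂DerivFactor d θ x) x := by
  have h1θ : 1 - θ ≠ 0 := sub_ne_zero.2 (Ne.symm hθ1)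
  have hpow₁ := Real.hasDerivAt_rpow_const (p := -1 / θ + 1) (Or.inl hx.ne')
  have hpow₂ := Real.hasDerivAt_rpow_const (p := -1 / θ) (Or.inl hx.ne')
  refine ((((hpow₁.const_mul (d / (1 - θ) - 1)).sub (hpow₂.const_mul (d - 1))).add
    (hasDerivAt_id' x)).sub_const (d * θ / (1 - θ) + 1)).congr_deriv ?_
  have hu : 0 < x ^ (1 / θ) := Real.rpow_pos_of_pos hx _
  rw [add_sub_cancel_right, Real.rpow_sub_one hx.ne', h₂DerivFactor, Real.rpow_add hx,
    Real.rpow_one, neg_div, Real.rpow_neg hx.le]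
  field_simp
  ring

theorem h₂_one (hθ1 : θ ≠ 1) : h₂ d θ 1 = 0 := by
  have : 1 - θ ≠ 0 := sub_ne_zero.2 (Ne.symm hθ1)
  simp only [h₂, Real.one_rpow]
  field_simp
  ring

theorem tendsto_h₂_atTop (hθ : 0 < θ) : Tendsto (h₂ d θ) atTop atTop := by
  have hpow : Tendsto (fun x : ℝ => (x ^ (1 / θ))⁻¹) atTop (𝓝 0) :=
    (tendsto_rpow_atTop (by positivity)).inv_tendsto_atTop
  have hinv : Tendsto (fun x : ℝ => x⁻¹) atTop (𝓝 0) := tendsto_inv_atTop_zero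
  have hlim : Tendsto (fun x : ℝ => 1 + (d / (1 - θ) - 1) * (x ^ (1 / θ))⁻¹
      - (d - 1) * ((x ^ (1 / θ))⁻¹ * x⁻¹) - (d * θ / (1 - θ) + 1) * x⁻¹) atTop (𝓝 1) := by
    simpa using (((hpow.const_mul _).const_add 1).sub ((hpow.mul hinv).const_mul _)).sub
      (hinv.const_mul _)
  refine (tendsto_id.atTop_mul_pos one_pos hlim).congr' ?_
  filter_upwards [eventually_gt_atTop 0] with x hx
  have hu : 0 < x ^ (1 / θ) := Real.rpow_pos_of_pos hx _
  rw [h₂, neg_div, Real.rpow_add hx, Real.rpow_neg hx.le, Real.rpow_one, id]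
  field_simp
  ring

end ParetoWorstVaR

open ParetoWorstVaR in
theorem stmt_8 (d : ℕ) (hd : 2 < d) (θ : ℝ) (hθ : 0 < θ) (hθ1 : θ ≠ 1) :
    ∃! x : ℝ, x ∈ Set.Ioi (1:ℝ) ∧
      ((d : ℝ) / (1 - θ) - 1) * x ^ (-1 / θ + 1) - ((d : ℝ) - 1) * x ^ (-1 / θ)
        + x - ((d : ℝ) * θ / (1 - θ) + 1) = 0 := by
  have hpos : ∀ x ∈ Ioi (1 : ℝ), 0 < x := fun x hx => one_pos.trans hx
  obtain ⟨t, ht, hsign_deriv_g⟩ :=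
    exists_sign_deriv_h₂DerivFactor_eq_sign_sub (d := d) (by exact_mod_cast hd) hθ
  obtain ⟨hanti_g, hmono_g⟩ := strictAntiOn_and_strictMonoOn_of_sign_deriv
    (continuous_h₂DerivFactor hθ).continuousOn (fun x hx => hasDerivAt_h₂DerivFactor (hpos x hx))
    (fun x hx => hsign_deriv_g x (Ioi_subset_Ici_self hx)) ht.le
  obtain ⟨x₁, hx₁, hsign_g⟩ := exists_sign_eq_sign_sub_of_strictAntiOn_of_strictMonoOn
    (continuous_h₂DerivFactor hθ).continuousOn (h₂DerivFactor_one hθ.ne') ht hanti_g hmono_g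
    (tendsto_h₂DerivFactor_atTop hθ)
  have hderiv : ∀ x ∈ Ioi (1 : ℝ),
      HasDerivAt (h₂ d θ) (x ^ (-1 / θ - 1) * h₂DerivFactor d θ x) x :=
    fun x hx => hasDerivAt_h₂ hθ.ne' hθ1 (hpos x hx)
  have hsign_deriv : ∀ x ∈ Ioi (1 : ℝ), SignType.sign (x ^ (-1 / θ - 1) * h₂DerivFactor d θ x)
      = SignType.sign (x - x₁) := fun x hx => by
    rw [sign_mul, sign_pos (Real.rpow_pos_of_pos (hpos x hx) _), one_mul, hsign_g x hx]
  have hcont : ContinuousOn (h₂ d θ) (Ici 1) := fun x hx =>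
    (hasDerivAt_h₂ hθ.ne' hθ1 (one_pos.trans_le hx)).continuousAt.continuousWithinAt
  obtain ⟨hanti, hmono⟩ :=
    strictAntiOn_and_strictMonoOn_of_sign_deriv hcont hderiv hsign_deriv hx₁.le
  obtain ⟨x₂, hx₂, hsign⟩ := exists_sign_eq_sign_sub_of_strictAntiOn_of_strictMonoOn hcont
    (h₂_one hθ1) hx₁ hanti hmono (tendsto_h₂_atTop hθ)
  exact existsUnique_eq_zero_of_sign_eq_sign_sub hx₂ hsign
end

section
/- Let $d > 2$ be an integer and define $h_2(x) = x^2 + x(-d\log x + d - 2) - (d-1)$ for $x \in (1,\infty)$. Then $h_2$ has a unique root on $(1,\infty)$. -/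
/-!
Dividing by `x`, the roots of `h₂` on `(1, ∞)` are those of
`g x = x - d log x + d - 2 - (d - 1) / x`, whose derivative is `(x - 1) (x - (d - 1)) / x²`.
Since `g 1 = 0`, `g` is negative on `(1, d - 1]`; it then increases strictly, and `g (4 d²) > 0`,
so it has exactly one root, which lies in `(d - 1, 4 d²)`.
-/

open Real Set

namespace WorstVaR

noncomputable def paretoAux (d x : ℝ) : ℝ :=
  x - d * log x + d - 2 - (d - 1) / x

variable {d : ℝ}

theorem mul_paretoAux {x : ℝ} (hx : x ≠ 0) :
    x * paretoAux d x = x ^ 2 + x * (-d * log x + d - 2) - (d - 1) := by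
  unfold paretoAux
  field_simp
  ring

theorem paretoAux_one : paretoAux d 1 = 0 := by
  simp only [paretoAux, log_one, div_one]
  ring

theorem hasDerivAt_paretoAux {x : ℝ} (hx : 0 < x) :
    HasDerivAt (paretoAux d) ((x - 1) * (x - (d - 1)) / x ^ 2) x := by
  have h : HasDerivAt (fun y => y - d * log y + d - 2 - (d - 1) * y⁻¹)
      (1 - d * x⁻¹ - (d - 1) * -(x ^ 2)⁻¹) x :=
    (((hasDerivAt_id x).sub ((hasDerivAt_log hx.ne').const_mul d)).add_const d).sub_const 2
      |>.sub ((hasDerivAt_inv hx.ne').const_mul (d - 1))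
  have hfun : paretoAux d = fun y => y - d * log y + d - 2 - (d - 1) * y⁻¹ :=
    funext fun y => by rw [paretoAux, div_eq_mul_inv]
  rw [hfun]
  exact h.congr_deriv (by field_simp; ring)

theorem continuousOn_paretoAux {s : Set ℝ} (hs : s ⊆ Ioi 0) : ContinuousOn (paretoAux d) s :=
  fun _ hx => (hasDerivAt_paretoAux (hs hx)).continuousAt.continuousWithinAt

theorem strictAntiOn_paretoAux : StrictAntiOn (paretoAux d) (Icc 1 (d - 1)) := by
  refine strictAntiOn_of_deriv_neg (convex_Icc 1 (d - 1))
    (continuousOn_paretoAux fun x hx => zero_lt_one.trans_le hx.1) fun x hx => ?_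
  rw [interior_Icc] at hx
  rw [(hasDerivAt_paretoAux (zero_lt_one.trans hx.1)).deriv]
  exact div_neg_of_neg_of_pos (mul_neg_of_pos_of_neg (by linarith [hx.1]) (by linarith [hx.2]))
    (pow_pos (zero_lt_one.trans hx.1) 2)

theorem strictMonoOn_paretoAux (hd : 2 ≤ d) : StrictMonoOn (paretoAux d) (Ici (d - 1)) := by
  refine strictMonoOn_of_deriv_pos (convex_Ici (d - 1))
    (continuousOn_paretoAux fun x hx => mem_Ioi.mpr (by linarith [mem_Ici.mp hx]))
    fun x hx => ?_
  rw [interior_Ici, mem_Ioi] at hx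
  have hx0 : 0 < x := by linarith
  rw [(hasDerivAt_paretoAux hx0).deriv]
  exact div_pos (mul_pos (by linarith) (by linarith)) (pow_pos hx0 2)

theorem paretoAux_pos (hd : 1 ≤ d) : 0 < paretoAux d (4 * d ^ 2) := by
  -- `log (4 d²) = 2 log (2 d) ≤ 2 (2 d - 1)` cancels the leading term `4 d²`.
  have hlog : log (4 * d ^ 2) ≤ 2 * (2 * d - 1) := by
    rw [show 4 * d ^ 2 = (2 * d) ^ 2 by ring, log_pow]
    push_cast
    linarith [log_le_sub_one_of_pos (by linarith : 0 < 2 * d)]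
  have hfrac : (d - 1) / (4 * d ^ 2) < 1 := by
    rw [div_lt_one (by positivity)]
    nlinarith
  unfold paretoAux
  nlinarith

theorem existsUnique_paretoAux_eq_zero (hd : 2 < d) :
    ∃! x, x ∈ Ioi 1 ∧ paretoAux d x = 0 := by
  have hneg : ∀ x ∈ Ioc 1 (d - 1), paretoAux d x < 0 := fun x hx =>
    paretoAux_one (d := d) ▸ strictAntiOn_paretoAux ⟨le_rfl, by linarith⟩ ⟨hx.1.le, hx.2⟩ hx.1
  have hroot_gt : ∀ x ∈ Ioi 1, paretoAux d x = 0 → d - 1 < x := fun x hx h0 => by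
    by_contra! hle
    exact (hneg x ⟨hx, hle⟩).ne h0
  obtain ⟨x, hx, hx0⟩ := intermediate_value_Icc (by nlinarith : d - 1 ≤ 4 * d ^ 2)
    (continuousOn_paretoAux fun y hy => mem_Ioi.mpr (by linarith [hy.1]))
    ⟨(hneg (d - 1) ⟨by linarith, le_rfl⟩).le, (paretoAux_pos (by linarith)).le⟩
  have hx1 : x ∈ Ioi 1 := mem_Ioi.mpr (by linarith [hx.1])
  refine ⟨x, ⟨hx1, hx0⟩, fun y ⟨hy1, hy0⟩ => ?_⟩
  exact (strictMonoOn_paretoAux hd.le).injOn (hroot_gt y hy1 hy0).le (hroot_gt x hx1 hx0).le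
    (hy0.trans hx0.symm)

end WorstVaR

open WorstVaR in
theorem stmt_9 (d : ℕ) (hd : 2 < d) :
    ∃! x : ℝ, x ∈ Set.Ioi (1:ℝ) ∧
      x ^ 2 + x * (-(d : ℝ) * Real.log x + d - 2) - ((d : ℝ) - 1) = 0 := by
  have hd' : (2 : ℝ) < d := by exact_mod_cast hd
  refine (existsUnique_congr fun x => and_congr_right fun hx => ?_).mp
    (existsUnique_paretoAux_eq_zero hd')
  have hx0 : x ≠ 0 := (zero_lt_one.trans hx).ne'
  rw [← mul_paretoAux hx0, mul_eq_zero, or_iff_right hx0]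
end

section
/- Let $\mathbf{a}, \mathbf{b} \in \mathbb{R}^N$. There exists a permutation $\sigma$ of $\{1,\dots,N\}$ such that $\mathbf{a}_\sigma = (a_{\sigma(1)},\dots,a_{\sigma(N)})$ and $\mathbf{b}$ are oppositely ordered, i.e., $(a_{\sigma(i)} - a_{\sigma(j)})(b_i - b_j) \le 0$ for all $i, j$. Moreover, this oppositely ordered arrangement maximizes $\min_i (a_{\tau(i)} + b_i)$ over all permutations $\tau$ of the entries of $\mathbf{a}$. -/
theorem stmt_19 (N : ℕ) (hN : 0 < N) (a b : Fin N → ℝ) :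
    ∃ σ : Equiv.Perm (Fin N),
      (∀ i j, (a (σ i) - a (σ j)) * (b i - b j) ≤ 0) ∧
      ∀ τ : Equiv.Perm (Fin N),
        Finset.univ.inf' (Finset.univ_nonempty_iff.mpr (Fin.pos_iff_nonempty.mp hN))
            (fun i => a (τ i) + b i) ≤
          Finset.univ.inf' (Finset.univ_nonempty_iff.mpr (Fin.pos_iff_nonempty.mp hN))
            (fun i => a (σ i) + b i) := by
  set σa := Tuple.sort a
  set σb := Tuple.sort b
  have ha : Monotone (a ∘ σa) := Tuple.monotone_sort a
  have hb : Monotone (b ∘ σb) := Tuple.monotone_sort b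
  refine ⟨σb.symm.trans (Fin.revPerm.trans σa), ?_, ?_⟩
  · intro i j
    simp only [Equiv.trans_apply, Fin.revPerm_apply]
    rcases lt_trichotomy (b i) (b j) with h | h | h
    · have hkl : σb.symm i < σb.symm j := by
        by_contra hc
        push_neg at hc
        have := hb hc
        simp only [Function.comp, Equiv.apply_symm_apply] at this
        linarith
      have : a (σa (Fin.rev (σb.symm j))) ≤ a (σa (Fin.rev (σb.symm i))) :=
        ha (Fin.rev_le_rev.mpr hkl.le)
      nlinarith
    · simp [h]
    · have hkl : σb.symm j < σb.symm i := by
        by_contra hc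
        push_neg at hc
        have := hb hc
        simp only [Function.comp, Equiv.apply_symm_apply] at this
        linarith
      have : a (σa (Fin.rev (σb.symm i))) ≤ a (σa (Fin.rev (σb.symm j))) :=
        ha (Fin.rev_le_rev.mpr hkl.le)
      nlinarith
  · intro τ
    set σ := σb.symm.trans (Fin.revPerm.trans σa) with hσ
    have hne : (Finset.univ : Finset (Fin N)).Nonempty :=
      Finset.univ_nonempty_iff.mpr (Fin.pos_iff_nonempty.mp hN)
    -- k* minimizing over sorted coordinates
    obtain ⟨k, -, hk⟩ := Finset.exists_min_image Finset.univ
      (fun k => a (σ (σb k)) + b (σb k)) hne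
    have hσk : ∀ k, σ (σb k) = σa (Fin.rev k) := by
      intro k; simp [hσ]
    -- pigeonhole
    set A : Finset (Fin N) := (Finset.Iic (Fin.rev k)).image σa with hA
    set T : Finset (Fin N) := ((Finset.Iic k).image σb).image τ with hT
    have cardA : A.card = (Fin.rev k : ℕ) + 1 := by
      rw [hA, Finset.card_image_of_injective _ σa.injective, Fin.card_Iic]
    have cardT : T.card = (k : ℕ) + 1 := by
      rw [hT, Finset.card_image_of_injective _ τ.injective,
        Finset.card_image_of_injective _ σb.injective, Fin.card_Iic]
    have hinter : (A ∩ T).Nonempty := by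
      rw [← Finset.card_pos]
      have h1 := Finset.card_inter_add_card_union A T
      have h2 : (A ∪ T).card ≤ N := by
        simpa using Finset.card_le_card (Finset.subset_univ (A ∪ T))
      have h3 : (Fin.rev k : ℕ) = N - 1 - k := Fin.val_rev k ▸ by omega
      have h4 : (k : ℕ) < N := k.isLt
      omega
    obtain ⟨x, hx⟩ := hinter
    obtain ⟨hxA, hxT⟩ := Finset.mem_inter.mp hx
    rw [hA, Finset.mem_image] at hxA
    obtain ⟨m, hm, hxm⟩ := hxA
    rw [hT, Finset.mem_image] at hxT
    obtain ⟨i, hi, hxi⟩ := hxT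
    rw [Finset.mem_image] at hi
    obtain ⟨l, hl, hil⟩ := hi
    rw [Finset.mem_Iic] at hm hl
    -- key bound
    have key : a (τ i) + b i ≤ a (σ (σb k)) + b (σb k) := by
      have h1 : a (τ i) ≤ a (σa (Fin.rev k)) := by
        rw [hxi, ← hxm]; exact ha hm
      have h2 : b i ≤ b (σb k) := by
        rw [← hil]; exact hb hl
      rw [hσk]; linarith
    refine le_trans (Finset.inf'_le _ (Finset.mem_univ i)) (key.trans ?_)
    apply Finset.le_inf'
    intro j _
    have := hk (σb.symm j) (Finset.mem_univ _)
    simpa using this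
end
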